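/- In the surface of Example with G = S_3 (K_S^2 = 5, standard isotrivial fibration with fibres of genus 3 over elliptic curves E_1, E_2): given curves on S with intersection numbers Y_1^2 = Y_2^2 = −1, K_S·Y_i = 1, W^2 = −3, Z_1^2 = Z_2^2 = −2, W·Z_1 = W·Z_2 = 0, Z_1·Z_2 = 1, Y_1·Y_2 = 0, and fibre classes F_1 = 3Y_1 + W + 2Z_1 + Z_2, F_2 = 3Y_2 + W + Z_1 + 2Z_2 with F_2 nef, and K_S = F_1 + (2Y_2 − Y_1 + Z_2): the divisor D = 2Y_2 − Y_1 + Z_2 satisfies D·F_2 = −2 < 0; hence D is not numerically equivalent to an effective divisor, i.e. K_S − F_1 is not (numerically) effective. -/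

import Mathlib

theorem not_exists_effective_numEquiv_of_nef_of_neg {N R : Type*} [Preorder R] [Zero R]
    (ι : N → N → R) (Effective : N → Prop) (NumEquiv : N → N → Prop) {F D : N}
    (hnef : ∀ X, Effective X → 0 ≤ ι F X) (hnum : ∀ X Y, NumEquiv X Y → ι F X = ι F Y)
    (hneg : ι F D < 0) : ¬ ∃ X, Effective X ∧ NumEquiv D X := by
  rintro ⟨X, hX, hDX⟩
  exact (hnef X hX).not_gt (hnum D X hDX ▸ hneg)

theorem KminusF1_not_effective_general
    (N : Type*) [AddCommGroup N] [Module ℤ N]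
    (ι : N →ₗ[ℤ] N →ₗ[ℤ] ℤ)
    (hsymm : ∀ X Y, ι X Y = ι Y X)
    (Y1 Y2 W Z1 Z2 F1 F2 D : N)
    (hF1 : F1 = 3 • Y1 + W + 2 • Z1 + Z2)
    (hD : D = 2 • Y2 - Y1 + Z2)
    (hF1F2 : ι F1 F2 = 6)
    -- each component of the fibre `F₂` has zero intersection with the fibre class
    (hY2F2 : ι Y2 F2 = 0) (hWF2 : ι W F2 = 0)
    (hZ1F2 : ι Z1 F2 = 0) (hZ2F2 : ι Z2 F2 = 0)
    (Effective : N → Prop) (NumEquiv : N → N → Prop)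
    -- `F₂` is nef: it meets every effective divisor non-negatively
    (hnef : ∀ X, Effective X → 0 ≤ ι F2 X)
    -- numerically equivalent divisors have the same intersection numbers
    (hnum : ∀ X Y, NumEquiv X Y → ι F2 X = ι F2 Y) :
    ι D F2 = -2 ∧ ¬ ∃ X, Effective X ∧ NumEquiv D X := by
  have hF1F2_eq : ι F1 F2 = 3 * ι Y1 F2 := by
    simp [hF1, hWF2, hZ1F2, hZ2F2]
  have hY1F2 : ι Y1 F2 = 2 := by omega
  have hDF2 : ι D F2 = -2 := by
    simp [hD, hY1F2, hY2F2, hZ2F2]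
  refine ⟨hDF2, not_exists_effective_numEquiv_of_nef_of_neg (fun X Y => ι X Y)
    Effective NumEquiv hnef hnum ?_⟩
  rw [hsymm, hDF2]
  decide

/-- In the standard isotrivial fibration example with `G = S₃` (`K_S² = 5`, fibres
of genus `3` over elliptic curves `E₁`, `E₂`): given the curves `Y₁, Y₂, W, Z₁, Z₂`
on `S` with the listed intersection numbers, fibre classes
`F₁ = 3Y₁ + W + 2Z₁ + Z₂` and `F₂ = 3Y₂ + W + Z₁ + 2Z₂` with `F₂` nef, and
`K_S = F₁ + (2Y₂ - Y₁ + Z₂)`, the divisor `D = 2Y₂ - Y₁ + Z₂` satisfies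
`D·F₂ = -2 < 0`; hence `D` is not numerically equivalent to an effective divisor,
i.e. `K_S - F₁` is not (numerically) effective.

Here `N` is the Néron–Severi group of `S` with intersection form `ι`. -/
theorem KminusF1_not_effective
    (N : Type*) [AddCommGroup N] [Module ℤ N]
    (ι : N →ₗ[ℤ] N →ₗ[ℤ] ℤ)
    (hsymm : ∀ X Y, ι X Y = ι Y X)
    (Y1 Y2 W Z1 Z2 F1 F2 K D : N)
    (hF1 : F1 = 3 • Y1 + W + 2 • Z1 + Z2)
    (hF2 : F2 = 3 • Y2 + W + Z1 + 2 • Z2)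
    (hD : D = 2 • Y2 - Y1 + Z2)
    (hK : K = F1 + D)
    (hY1sq : ι Y1 Y1 = -1) (hY2sq : ι Y2 Y2 = -1) (hY12 : ι Y1 Y2 = 0)
    (hKY1 : ι K Y1 = 1) (hKY2 : ι K Y2 = 1)
    (hWsq : ι W W = -3) (hZ1sq : ι Z1 Z1 = -2) (hZ2sq : ι Z2 Z2 = -2)
    (hWZ1 : ι W Z1 = 0) (hWZ2 : ι W Z2 = 0) (hZ12 : ι Z1 Z2 = 1)
    (hF1F2 : ι F1 F2 = 6) (hF2sq : ι F2 F2 = 0)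
    -- each component of the fibre `F₂` has zero intersection with the fibre class
    (hY2F2 : ι Y2 F2 = 0) (hWF2 : ι W F2 = 0)
    (hZ1F2 : ι Z1 F2 = 0) (hZ2F2 : ι Z2 F2 = 0)
    (Effective : N → Prop) (NumEquiv : N → N → Prop)
    -- `F₂` is nef: it meets every effective divisor non-negatively
    (hnef : ∀ X, Effective X → 0 ≤ ι F2 X)
    -- numerically equivalent divisors have the same intersection numbers
    (hnum : ∀ X Y, NumEquiv X Y → ι F2 X = ι F2 Y) :
    ι D F2 = -2 ∧ ¬ ∃ X, Effective X ∧ NumEquiv D X :=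
  KminusF1_not_effective_general N ι hsymm Y1 Y2 W Z1 Z2 F1 F2 D hF1 hD hF1F2 hY2F2 hWF2 hZ1F2 hZ2F2
    Effective NumEquiv hnef hnum
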